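/- For all i with 1 ≤ i ≤ N-5, the number T_i(N) of partial Dyck paths from (0,0) to (N-1-i, N-1) satisfies T_i(N)/C_N ≤ (1/3)·(3/4)^{i-1}. -/

import Mathlib

/-!
By the reflection principle the partial Dyck paths to `(a, b)`, `a ≤ b + 1`, are counted by the
ballot formula `(b + 1) P(a, b) = (b + 1 - a) C(a + b, a)`. Hence `T_{i+1}(N) / T_i(N)` equals
`(i + 2)(N - 1 - i) / ((i + 1)(2N - 2 - i))`, which is at most `3/4` once `i ≥ 1`, while
`T_1(N) = C_{N-1} ≤ C_N / 3` because `(N + 1) C_N = 2(2N - 1) C_{N-1}` and `N ≥ 5`.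
-/

def IsPrefixDyck (w : List Bool) : Prop :=
  ∀ t : ℕ, (w.take t).count false ≤ (w.take t).count true

/-- The number of partial Dyck paths from `(0,0)` to `(a,b)`. -/
noncomputable def partialDyckCount (a b : ℕ) : ℕ :=
  Nat.card {w : List Bool // w.length = a + b ∧ w.count false = a ∧ IsPrefixDyck w}

/-- `T_i(N)`: the number of partial Dyck paths from `(0,0)` to `(N-1-i, N-1)`. -/
noncomputable def T (i N : ℕ) : ℕ := partialDyckCount (N - 1 - i) (N - 1)

theorem isPrefixDyck_append_singleton {u : List Bool} {x : Bool} :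
    IsPrefixDyck (u ++ [x]) ↔
      IsPrefixDyck u ∧ (u ++ [x]).count false ≤ (u ++ [x]).count true := by
  constructor
  · intro h
    refine ⟨fun t => ?_, by simpa [List.take_of_length_le] using h (u.length + 1)⟩
    rcases le_or_gt t u.length with ht | ht
    · simpa [List.take_append_of_le_length ht] using h t
    · simpa [List.take_of_length_le ht.le] using h u.length
  · rintro ⟨hu, hx⟩ t
    rcases le_or_gt t u.length with ht | ht
    · simpa [List.take_append_of_le_length ht] using hu t
    · rwa [List.take_of_length_le (by grind)]

def partialDyckWords (a b : ℕ) : Set (List Bool) :=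
  {w | w.length = a + b ∧ w.count false = a ∧ IsPrefixDyck w}

theorem partialDyckWords_finite (a b : ℕ) : (partialDyckWords a b).Finite :=
  (List.finite_length_eq Bool (a + b)).subset fun _ hw => hw.1

theorem partialDyckCount_eq_ncard (a b : ℕ) :
    partialDyckCount a b = (partialDyckWords a b).ncard :=
  Nat.card_coe_set_eq _

theorem partialDyckCount_eq_zero_of_lt {a b : ℕ} (h : b < a) : partialDyckCount a b = 0 := by
  rw [partialDyckCount_eq_ncard, Set.ncard_eq_zero (partialDyckWords_finite a b),
    Set.eq_empty_iff_forall_notMem]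
  rintro w ⟨hlen, hfalse, hdyck⟩
  have hprefix := hdyck w.length
  rw [List.take_length] at hprefix
  grind

theorem partialDyckCount_zero_left (b : ℕ) : partialDyckCount 0 b = 1 := by
  rw [partialDyckCount_eq_ncard, Set.ncard_eq_one]
  refine ⟨List.replicate b true, Set.eq_singleton_iff_unique_mem.2 ⟨?_, ?_⟩⟩
  · exact ⟨by simp, by simp [List.count_replicate], fun t => by simp [List.count_replicate]⟩
  · rintro w ⟨hlen, hfalse, -⟩
    refine List.eq_replicate_iff.2 ⟨by omega, fun x hx => ?_⟩
    cases x
    · exact absurd hx (List.count_eq_zero.1 hfalse)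
    · rfl

theorem partialDyckWords_succ_succ {a b : ℕ} (hab : a ≤ b) :
    partialDyckWords (a + 1) (b + 1) =
      (· ++ [false]) '' partialDyckWords a (b + 1) ∪ (· ++ [true]) '' partialDyckWords (a + 1) b := by
  ext w
  constructor
  · rintro ⟨hlen, hfalse, hdyck⟩
    obtain rfl | ⟨u, x, rfl⟩ := w.eq_nil_or_concat
    · simp at hlen
    rw [List.concat_eq_append, isPrefixDyck_append_singleton] at hdyck
    simp only [List.concat_eq_append, List.length_append, List.length_singleton] at hlen hfalse ⊢
    cases x
    · exact .inl ⟨u, ⟨by omega, by grind, hdyck.1⟩, rfl⟩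
    · exact .inr ⟨u, ⟨by omega, by simpa using hfalse, hdyck.1⟩, rfl⟩
  · rintro (⟨u, ⟨hlen, hfalse, hdyck⟩, rfl⟩ | ⟨u, ⟨hlen, hfalse, hdyck⟩, rfl⟩) <;>
      exact ⟨by grind, by simp [hfalse], isPrefixDyck_append_singleton.2 ⟨hdyck, by grind⟩⟩

theorem partialDyckCount_succ_succ {a b : ℕ} (hab : a ≤ b) :
    partialDyckCount (a + 1) (b + 1) =
      partialDyckCount a (b + 1) + partialDyckCount (a + 1) b := by
  have hdisj : Disjoint ((· ++ [false]) '' partialDyckWords a (b + 1))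
      ((· ++ [true]) '' partialDyckWords (a + 1) b) := by
    rw [Set.disjoint_left]
    rintro _ ⟨u, -, rfl⟩ ⟨v, -, h⟩
    simpa using congrArg List.getLast? h
  simp only [partialDyckCount_eq_ncard, partialDyckWords_succ_succ hab]
  rw [Set.ncard_union_eq hdisj ((partialDyckWords_finite _ _).image _)
      ((partialDyckWords_finite _ _).image _),
    Set.ncard_image_of_injective _ (List.append_left_injective _),
    Set.ncard_image_of_injective _ (List.append_left_injective _)]

/-- By the reflection principle, `(a + b).choose (b + 1)` counts the lattice paths to `(a, b)`
that cross the diagonal. -/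
theorem partialDyckCount_add_choose : ∀ {a b : ℕ}, a ≤ b + 1 →
    partialDyckCount a b + (a + b).choose (b + 1) = (a + b).choose a
  | 0, b, _ => by simp [partialDyckCount_zero_left]
  | a + 1, b, h => by
    obtain rfl | hab := (Nat.lt_succ_iff.1 h).eq_or_lt
    · rw [partialDyckCount_eq_zero_of_lt (by omega), Nat.zero_add, Nat.add_comm (a + 1)]
    obtain ⟨b, rfl⟩ : ∃ b', b = b' + 1 := ⟨b - 1, by omega⟩
    have h₁ : partialDyckCount a (b + 1) + (a + b + 1).choose (b + 1 + 1) = (a + b + 1).choose a :=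
      partialDyckCount_add_choose (by omega)
    have h₂ := partialDyckCount_add_choose (a := a + 1) (b := b) (by omega)
    rw [show a + 1 + b = a + b + 1 by omega] at h₂
    rw [partialDyckCount_succ_succ (by omega), show a + 1 + (b + 1) = a + b + 1 + 1 by omega,
      Nat.choose_succ_succ' _ (b + 1), Nat.choose_succ_succ' _ a]
    omega
termination_by a b => a + b

theorem partialDyckCount_ballot {a b : ℕ} (h : a ≤ b + 1) :
    (b + 1) * partialDyckCount a b = (b + 1 - a) * (a + b).choose a := by
  have hchoose : (a + b).choose (b + 1) * (b + 1) = a * (a + b).choose a := by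
    rw [Nat.choose_succ_right_eq, Nat.add_sub_cancel, ← Nat.choose_symm_add, mul_comm]
  rw [Nat.sub_mul]
  refine Nat.eq_sub_of_add_eq ?_
  rw [← hchoose, mul_comm _ (b + 1), ← mul_add, partialDyckCount_add_choose h]

theorem partialDyckCount_self (n : ℕ) : partialDyckCount n n = catalan n := by
  refine Nat.eq_of_mul_eq_mul_left n.succ_pos ?_
  rw [partialDyckCount_ballot n.le_succ, succ_mul_catalan_eq_centralBinom, Nat.centralBinom,
    two_mul, Nat.add_sub_cancel_left, one_mul]

theorem partialDyckCount_self_succ (n : ℕ) : partialDyckCount n (n + 1) = catalan (n + 1) := by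
  rw [← partialDyckCount_self, partialDyckCount_succ_succ le_rfl,
    partialDyckCount_eq_zero_of_lt n.lt_succ_self, add_zero]

theorem four_mul_partialDyckCount_le {a b : ℕ} (h : a + 2 ≤ b) :
    4 * partialDyckCount a b ≤ 3 * partialDyckCount (a + 1) b := by
  obtain ⟨d, rfl⟩ : ∃ d, b = a + 2 + d := ⟨b - (a + 2), by omega⟩
  set C := (a + (a + 2 + d)).choose a
  set C' := (a + 1 + (a + 2 + d)).choose (a + 1)
  have hP : (a + 2 + d + 1) * partialDyckCount a (a + 2 + d) = (d + 3) * C := by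
    rw [partialDyckCount_ballot (by omega)]
    congr 1
    omega
  have hP' : (a + 2 + d + 1) * partialDyckCount (a + 1) (a + 2 + d) = (d + 2) * C' := by
    rw [partialDyckCount_ballot (by omega)]
    congr 1
    omega
  have hC : (2 * a + d + 3) * C = C' * (a + 1) := by
    rw [show 2 * a + d + 3 = a + (a + 2 + d) + 1 by omega, Nat.add_one_mul_choose_eq,
      show a + (a + 2 + d) + 1 = a + 1 + (a + 2 + d) by omega]
  have hcoeff : 4 * (a + 1) * (d + 3) ≤ 3 * (d + 2) * (2 * a + d + 3) := by nlinarith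
  refine Nat.le_of_mul_le_mul_left ?_ (by positivity : 0 < (a + 1) * (a + 2 + d + 1))
  calc (a + 1) * (a + 2 + d + 1) * (4 * partialDyckCount a (a + 2 + d))
      = 4 * (a + 1) * ((a + 2 + d + 1) * partialDyckCount a (a + 2 + d)) := by ring
    _ = 4 * (a + 1) * (d + 3) * C := by rw [hP]; ring
    _ ≤ 3 * (d + 2) * (2 * a + d + 3) * C := Nat.mul_le_mul_right C hcoeff
    _ = 3 * (d + 2) * C' * (a + 1) := by rw [mul_assoc _ (2 * a + d + 3), hC]; ring
    _ = 3 * (a + 1) * ((a + 2 + d + 1) * partialDyckCount (a + 1) (a + 2 + d)) := by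
      rw [hP']; ring
    _ = (a + 1) * (a + 2 + d + 1) * (3 * partialDyckCount (a + 1) (a + 2 + d)) := by ring

theorem catalan_pos (n : ℕ) : 0 < catalan n := by
  refine Nat.pos_of_ne_zero fun h => Nat.centralBinom_ne_zero n ?_
  rw [← succ_mul_catalan_eq_centralBinom, h, mul_zero]

theorem succ_succ_mul_catalan_succ (n : ℕ) :
    (n + 2) * catalan (n + 1) = 2 * (2 * n + 1) * catalan n := by
  refine Nat.eq_of_mul_eq_mul_left n.succ_pos ?_
  calc (n + 1) * ((n + 2) * catalan (n + 1)) = (n + 1) * Nat.centralBinom (n + 1) := by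
        rw [← succ_mul_catalan_eq_centralBinom]
    _ = (n + 1) * (2 * (2 * n + 1) * catalan n) := by
        rw [Nat.succ_mul_centralBinom_succ, ← succ_mul_catalan_eq_centralBinom]; ring

theorem three_mul_catalan_le {n : ℕ} (h : 4 ≤ n) : 3 * catalan n ≤ catalan (n + 1) := by
  refine Nat.le_of_mul_le_mul_left ?_ (by omega : 0 < n + 2)
  calc (n + 2) * (3 * catalan n) ≤ 2 * (2 * n + 1) * catalan n := by
        rw [← mul_assoc]; exact Nat.mul_le_mul_right _ (by omega)
    _ = (n + 2) * catalan (n + 1) := (succ_succ_mul_catalan_succ n).symm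

theorem T_one {N : ℕ} (hN : 2 ≤ N) : T 1 N = catalan (N - 1) := by
  obtain ⟨n, rfl⟩ : ∃ n, N = n + 2 := ⟨N - 2, by omega⟩
  simpa [T] using partialDyckCount_self_succ n

theorem four_mul_T_succ_le {i N : ℕ} (hi : 1 ≤ i) (hN : i + 2 ≤ N) :
    4 * T (i + 1) N ≤ 3 * T i N := by
  have h := four_mul_partialDyckCount_le (a := N - 1 - (i + 1)) (b := N - 1) (by omega)
  rwa [show N - 1 - (i + 1) + 1 = N - 1 - i by omega] at h

/-- For `1 ≤ i ≤ N-5`, we have `T_i(N)/C_N ≤ (1/3)·(3/4)^{i-1}`. -/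
theorem T_ratio_bound (N i : ℕ) (h1 : 1 ≤ i) (h2 : i ≤ N - 5) :
    (T i N : ℝ) / (catalan N : ℝ) ≤ (1 / 3) * (3 / 4) ^ (i - 1) := by
  obtain ⟨k, rfl⟩ : ∃ k, i = k + 1 := ⟨i - 1, by omega⟩
  have hC : (0 : ℝ) < catalan N := by exact_mod_cast catalan_pos N
  set u : ℕ → ℝ := fun j => (T (j + 1) N : ℝ) / catalan N
  have hbase : u 0 ≤ 1 / 3 := by
    have hnat := three_mul_catalan_le (n := N - 1) (by omega)
    rw [show N - 1 + 1 = N by omega, ← T_one (by omega)] at hnat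
    have hreal : (3 : ℝ) * T 1 N ≤ catalan N := by exact_mod_cast hnat
    rw [div_le_iff₀ hC]
    linarith
  have hstep : ∀ j < k, u (j + 1) ≤ 3 / 4 * u j := by
    intro j hj
    have hnat := four_mul_T_succ_le (i := j + 1) (N := N) (by omega) (by omega)
    have hreal : (4 : ℝ) * T (j + 1 + 1) N ≤ 3 * T (j + 1) N := by exact_mod_cast hnat
    rw [← mul_div_assoc, div_le_div_iff_of_pos_right hC]
    linarith
  calc u k ≤ (3 / 4) ^ k * u 0 := le_geom (by norm_num) k hstep
    _ ≤ (3 / 4) ^ k * (1 / 3) := by gcongr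
    _ = 1 / 3 * (3 / 4) ^ (k + 1 - 1) := by rw [Nat.add_sub_cancel, mul_comm]
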